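/- arXiv:2206.05285 — 3 statements merged into one kernel-verified Lean document; each statement's English description precedes it below -/
import Mathlib

section
/- Let k be a field and R = k[x₀,…,x₅] the polynomial ring in six variables. Let f ∈ R be an irreducible homogeneous polynomial of degree 3. Suppose M and N are n×n matrices over R such that every entry of M is homogeneous of degree 1 and M·N = f·(identity matrix of size n). Then n is divisible by 3 and there exists a nonzero scalar c ∈ k such that det M = c·f^(n/3). -/
/-- Units of a multivariate polynomial ring over a field (with `Fin m` variables)
are nonzero constants. -/
lemma mvpoly_isUnit_eq_C {K : Type*} [Field K] :
    ∀ (m : ℕ) (u : MvPolynomial (Fin m) K), IsUnit u → ∃ c : K, u = MvPolynomial.C c := by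
  intro m
  induction m with
  | zero =>
    intro u _
    exact ⟨MvPolynomial.coeff 0 u, MvPolynomial.eq_C_of_isEmpty u⟩
  | succ m ih =>
    intro u hu
    set e := MvPolynomial.finSuccEquiv K m with he
    have hue : IsUnit (e u) := hu.map e
    have hdeg : (e u).degree = 0 := Polynomial.degree_eq_zero_of_isUnit hue
    have heq : e u = Polynomial.C ((e u).coeff 0) :=
      Polynomial.eq_C_of_degree_le_zero hdeg.le
    have hcu : IsUnit ((e u).coeff 0) := by
      rw [heq] at hue
      exact Polynomial.isUnit_C.mp hue
    obtain ⟨c, hc⟩ := ih _ hcu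
    refine ⟨c, ?_⟩
    have : e u = e (MvPolynomial.C c) := by
      rw [heq, hc]
      have : (MvPolynomial.C c : MvPolynomial (Fin (m + 1)) K)
          = algebraMap K _ c := rfl
      rw [this, AlgEquiv.commutes]
      rfl
    exact e.injective this

/-- Let `k` be a field and `R = k[x₀,…,x₅]`. Let `f ∈ R` be an
irreducible homogeneous polynomial of degree 3. If `M` and `N` are `n × n` matrices
over `R` with all entries of `M` homogeneous of degree 1 and `M · N = f · Id`, then
`3 ∣ n` and `det M = c · f ^ (n / 3)` for some nonzero scalar `c ∈ k`. -/
theorem linear_matrix_factorization_det_pow {k : Type*} [Field k]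
    (f : MvPolynomial (Fin 6) k) (hf_irr : Irreducible f)
    (hf_hom : f.IsHomogeneous 3) (n : ℕ)
    (M N : Matrix (Fin n) (Fin n) (MvPolynomial (Fin 6) k))
    (hM : ∀ i j, (M i j).IsHomogeneous 1)
    (hMN : M * N = f • (1 : Matrix (Fin n) (Fin n) (MvPolynomial (Fin 6) k))) :
    3 ∣ n ∧ ∃ c : k, c ≠ 0 ∧ M.det = MvPolynomial.C c * f ^ (n / 3) := by
  have hf_ne : f ≠ 0 := hf_irr.ne_zero
  -- det M is homogeneous of degree n
  have hdet_hom : M.det.IsHomogeneous n := by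
    rw [Matrix.det_apply]
    apply MvPolynomial.IsHomogeneous.sum
    intro σ _
    have hprod : (∏ i, M (σ i) i).IsHomogeneous n := by
      have := MvPolynomial.IsHomogeneous.prod Finset.univ (fun i => M (σ i) i)
        (fun _ => 1) (fun i _ => hM (σ i) i)
      simpa using this
    rcases Int.units_eq_one_or (Equiv.Perm.sign σ) with h | h <;> simp [h, hprod, hprod.neg]
  -- det M * det N = f ^ n
  have hdetMN : M.det * N.det = f ^ n := by
    have := congrArg Matrix.det hMN
    rwa [Matrix.det_mul, Matrix.det_smul, Matrix.det_one, Fintype.card_fin,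
      mul_one] at this
  have hfn_ne : f ^ n ≠ 0 := pow_ne_zero n hf_ne
  have hdet_ne : M.det ≠ 0 := fun h => hfn_ne (by rw [← hdetMN, h, zero_mul])
  -- f is prime
  have hf_prime : Prime f := hf_irr.prime
  -- det M divides f ^ n, so it is associated to a power of f
  obtain ⟨m, hm_le, u, hu⟩ := (dvd_prime_pow hf_prime n).mp ⟨N.det, hdetMN.symm⟩
  -- the unit is a nonzero constant
  obtain ⟨c', hc'⟩ := mvpoly_isUnit_eq_C 6 (u : MvPolynomial (Fin 6) k) u.isUnit
  have hc'_ne : c' ≠ 0 := by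
    rintro rfl
    simpa [hc'] using u.ne_zero
  have hdet_eq : M.det = MvPolynomial.C c'⁻¹ * f ^ m := by
    rw [← hu, hc', mul_comm M.det, ← mul_assoc, ← MvPolynomial.C_mul,
      inv_mul_cancel₀ hc'_ne, MvPolynomial.C_1, one_mul]
  -- compare degrees: n = 3 * m
  have hhom2 : M.det.IsHomogeneous (3 * m) := by
    rw [hdet_eq]
    simpa using (hf_hom.pow m).C_mul c'⁻¹
  have hn : n = 3 * m := hdet_hom.inj_right hhom2 hdet_ne
  refine ⟨⟨m, hn⟩, c'⁻¹, inv_ne_zero hc'_ne, ?_⟩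
  rw [hdet_eq, hn, Nat.mul_div_cancel_left m (by norm_num)]
end

section
/- Let R be a commutative ring, f ∈ R a non-zero-divisor, and A, B ∈ Mat_n(R) square matrices with A·B = B·A = f·(identity matrix of size n). Let S = R/(f) and let Ā, B̄ denote the reductions of A and B modulo f. Then, viewing Ā and B̄ as S-linear endomorphisms of Sⁿ (by matrix-vector multiplication), the kernel of Ā equals the image of B̄, and the kernel of B̄ equals the image of Ā; that is, the 2-periodic complex ⋯ → Sⁿ →B̄ Sⁿ →Ā Sⁿ →B̄ Sⁿ → ⋯ is exact. -/
lemma mf_aux {R : Type*} [CommRing R]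
    (f : R) (hf : f ∈ nonZeroDivisors R) (n : ℕ)
    (A B : Matrix (Fin n) (Fin n) R)
    (hAB : A * B = f • (1 : Matrix (Fin n) (Fin n) R))
    (hBA : B * A = f • (1 : Matrix (Fin n) (Fin n) R)) :
    LinearMap.ker (Matrix.mulVecLin
        (A.map (Ideal.Quotient.mk (Ideal.span {f})))) =
      LinearMap.range (Matrix.mulVecLin
        (B.map (Ideal.Quotient.mk (Ideal.span {f})))) := by
  set π := Ideal.Quotient.mk (Ideal.span {f}) with hπ
  have hπf : π f = 0 := Ideal.Quotient.eq_zero_iff_mem.2 (Ideal.mem_span_singleton_self f)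
  apply le_antisymm
  · intro xb hxb
    -- lift xb to x : Fin n → R
    obtain ⟨x, hx⟩ : ∃ x : Fin n → R, π ∘ x = xb := by
      choose x hx using fun i => Ideal.Quotient.mk_surjective (I := Ideal.span {f}) (xb i)
      exact ⟨x, funext hx⟩
    have hker : ∀ i, π ((A.mulVec x) i) = 0 := by
      intro i
      have := congrFun (LinearMap.mem_ker.mp hxb) i
      rw [Matrix.mulVecLin_apply] at this
      rw [RingHom.map_mulVec π A x i, hx]
      exact this
    -- each entry of A.mulVec x is f * (something)
    choose y hy using fun i =>
      Ideal.mem_span_singleton'.mp (Ideal.Quotient.eq_zero_iff_mem.mp (hker i))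
    have hAx : A.mulVec x = f • y := by
      funext i
      simpa [mul_comm] using (hy i).symm
    have hfx : f • x = f • B.mulVec y := by
      calc f • x = (f • (1 : Matrix (Fin n) (Fin n) R)).mulVec x := by
            simp [Matrix.smul_mulVec]
        _ = (B * A).mulVec x := by rw [hBA]
        _ = B.mulVec (A.mulVec x) := by rw [Matrix.mulVec_mulVec]
        _ = f • B.mulVec y := by rw [hAx, Matrix.mulVec_smul]
    have hx' : x = B.mulVec y := by
      funext i
      have : f * x i = f * (B.mulVec y) i := congrFun hfx i
      exact (mul_cancel_left_mem_nonZeroDivisors hf).mp this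
    refine ⟨π ∘ y, ?_⟩
    rw [Matrix.mulVecLin_apply]
    funext i
    rw [← RingHom.map_mulVec π B y i, ← hx, ← hx']
    rfl
  · rintro _ ⟨y, rfl⟩
    rw [LinearMap.mem_ker, Matrix.mulVecLin_apply, Matrix.mulVecLin_apply,
      Matrix.mulVec_mulVec, ← Matrix.map_mul, hAB]
    funext i
    simp [Matrix.mulVec, dotProduct, Matrix.map_apply, Matrix.one_apply,
      apply_ite π, hπf]

/-- Let `R` be a commutative ring, `f` a non-zero-divisor, and
`A, B` square matrices with `A·B = B·A = f·Id`. Over `S = R/(f)`, the reductions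
`Ā, B̄` (viewed as `S`-linear endomorphisms of `Sⁿ`) satisfy `ker Ā = im B̄` and
`ker B̄ = im Ā`, i.e. the 2-periodic complex `⋯ → Sⁿ →B̄ Sⁿ →Ā Sⁿ → ⋯` is exact. -/
theorem matrix_factorization_two_periodic_exact {R : Type*} [CommRing R]
    (f : R) (hf : f ∈ nonZeroDivisors R) (n : ℕ)
    (A B : Matrix (Fin n) (Fin n) R)
    (hAB : A * B = f • (1 : Matrix (Fin n) (Fin n) R))
    (hBA : B * A = f • (1 : Matrix (Fin n) (Fin n) R)) :
    LinearMap.ker (Matrix.mulVecLin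
        (A.map (Ideal.Quotient.mk (Ideal.span {f})))) =
      LinearMap.range (Matrix.mulVecLin
        (B.map (Ideal.Quotient.mk (Ideal.span {f})))) ∧
    LinearMap.ker (Matrix.mulVecLin
        (B.map (Ideal.Quotient.mk (Ideal.span {f})))) =
      LinearMap.range (Matrix.mulVecLin
        (A.map (Ideal.Quotient.mk (Ideal.span {f})))) := by
  exact ⟨mf_aux f hf n A B hAB hBA, mf_aux f hf n B A hBA hAB⟩
end

section
/- There exists an irreducible homogeneous polynomial f of degree 3 in ℂ[x₀,…,x₅] such that for every integer r ≥ 2 there is a 3r×3r matrix M, all of whose entries are homogeneous of degree 1, with det M = f^r, and which is indecomposable in the following sense: there do not exist invertible scalar matrices P, Q ∈ GL(3r, ℂ), an integer s with 0 < s < 3r, an s×s matrix M₁ and a (3r−s)×(3r−s) matrix M₂ over ℂ[x₀,…,x₅], such that P·M·Q is the block-diagonal matrix with blocks M₁ and M₂. -/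
open MvPolynomial Matrix

noncomputable section UlrichAux

/-- The cubic `x₀³ + x₁x₂x₃`. -/
def fCubic : MvPolynomial (Fin 6) ℂ := X 0 ^ 3 + X 1 * X 2 * X 3

lemma prime_X0 : Prime (X 0 : MvPolynomial (Fin 5) ℂ) := by
  rw [← MulEquiv.prime_iff (finSuccEquiv ℂ 4).toRingEquiv.toMulEquiv]
  show Prime ((finSuccEquiv ℂ 4) (X 0))
  rw [finSuccEquiv_X_zero]
  exact Polynomial.prime_X

lemma X0_not_dvd (k : Fin 5) (hk : k ≠ 0) :
    ¬ (X 0 : MvPolynomial (Fin 5) ℂ) ∣ X k := by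
  rintro ⟨g, hg⟩
  have h := congrArg (eval (fun i : Fin 5 => if i = 0 then (0:ℂ) else 1)) hg
  simp [hk] at h

lemma irreducible_F :
    Irreducible (Polynomial.X ^ 3 +
      Polynomial.C (X 0 * X 1 * X 2 : MvPolynomial (Fin 5) ℂ)) := by
  set c : MvPolynomial (Fin 5) ℂ := X 0 * X 1 * X 2 with hc
  have hprime : (Ideal.span {(X 0 : MvPolynomial (Fin 5) ℂ)}).IsPrime :=
    (Ideal.span_singleton_prime (MvPolynomial.X_ne_zero 0)).mpr prime_X0
  have hmonic : (Polynomial.X ^ 3 + Polynomial.C c).Monic :=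
    Polynomial.monic_X_pow_add_C _ (by norm_num)
  have hdeg : (Polynomial.X ^ 3 + Polynomial.C c).natDegree = 3 :=
    Polynomial.natDegree_X_pow_add_C
  have hEis : (Polynomial.X ^ 3 + Polynomial.C c).IsEisensteinAt
      (Ideal.span {(X 0 : MvPolynomial (Fin 5) ℂ)}) := by
    constructor
    · rw [hmonic.leadingCoeff]
      intro h1
      exact hprime.ne_top (Ideal.eq_top_iff_one _ |>.mpr h1)
    · intro n hn
      rw [hdeg] at hn
      interval_cases n <;>
        simp [Polynomial.coeff_X_pow, Ideal.mem_span_singleton] <;>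
        exact ⟨X 1 * X 2, by ring⟩
    · simp only [Polynomial.coeff_add, Polynomial.coeff_X_pow, Polynomial.coeff_C]
      norm_num
      rw [Ideal.span_singleton_pow, Ideal.mem_span_singleton, hc]
      intro hdvd
      have h2 : (X 0 : MvPolynomial (Fin 5) ℂ) ∣ X 1 * X 2 := by
        have : (X 0 * X 0 : MvPolynomial (Fin 5) ℂ) ∣ X 0 * (X 1 * X 2) := by
          rw [← sq]; convert hdvd using 1; ring
        exact (mul_dvd_mul_iff_left (MvPolynomial.X_ne_zero (R := ℂ) (0 : Fin 5))).mp this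
      rcases prime_X0.2.2 _ _ h2 with h | h
      · exact X0_not_dvd 1 (by decide) h
      · exact X0_not_dvd 2 (by decide) h
  exact hEis.irreducible hprime hmonic.isPrimitive (by omega)

lemma irreducible_fCubic : Irreducible fCubic := by
  rw [← MulEquiv.irreducible_iff (finSuccEquiv ℂ 5)]
  have h1 : (finSuccEquiv ℂ 5) fCubic =
      Polynomial.X ^ 3 + Polynomial.C (X 0 * X 1 * X 2 : MvPolynomial (Fin 5) ℂ) := by
    have e1 : (1 : Fin 6) = Fin.succ 0 := rfl
    have e2 : (2 : Fin 6) = Fin.succ 1 := rfl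
    have e3 : (3 : Fin 6) = Fin.succ 2 := rfl
    rw [fCubic, map_add, map_pow, _root_.map_mul, _root_.map_mul, e1, e2, e3,
      finSuccEquiv_X_zero, finSuccEquiv_X_succ, finSuccEquiv_X_succ,
      finSuccEquiv_X_succ, ← _root_.map_mul, ← _root_.map_mul]
  rw [h1]
  exact irreducible_F

lemma fCubic_homogeneous : fCubic.IsHomogeneous 3 := by
  apply MvPolynomial.IsHomogeneous.add
  · exact isHomogeneous_X_pow _ _
  · have := ((isHomogeneous_X ℂ (1 : Fin 6)).mul
      (isHomogeneous_X ℂ (2 : Fin 6))).mul (isHomogeneous_X ℂ (3 : Fin 6))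
    convert this using 1

/-- The `n×n` matrix of linear forms: `X 0` on the diagonal, `X 1 / X 2 / X 4`
on the superdiagonal (according to position mod 3), `X 3` at `(3t+2, 3t)`. -/
def Mmat (n : ℕ) : Matrix (Fin n) (Fin n) (MvPolynomial (Fin 6) ℂ) :=
  Matrix.of fun i j =>
    if (i : ℕ) = j then X 0
    else if (j : ℕ) = (i : ℕ) + 1 then
      (if (i : ℕ) % 3 = 0 then X 1 else if (i : ℕ) % 3 = 1 then X 2 else X 4)
    else if (i : ℕ) % 3 = 2 ∧ (j : ℕ) + 2 = (i : ℕ) then X 3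
    else 0

lemma Mmat_homogeneous (n : ℕ) (i j : Fin n) : (Mmat n i j).IsHomogeneous 1 := by
  simp only [Mmat, of_apply]
  split_ifs <;> first
    | exact isHomogeneous_X _ _
    | exact isHomogeneous_zero _ _ _

lemma Mmat_blockTriangular (n : ℕ) :
    (Mmat n).BlockTriangular (fun i : Fin n => (i : ℕ) / 3) := by
  intro i j h
  have h' : (j : ℕ) / 3 < (i : ℕ) / 3 := h
  simp only [Mmat, of_apply]
  rw [if_neg (by omega), if_neg (by omega), if_neg (by omega)]

/-- The equivalence between `Fin 3` and block `t` of `Fin (3*r)`. -/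
def blockEquiv (r t : ℕ) (ht : t < r) :
    Fin 3 ≃ { i : Fin (3 * r) // (i : ℕ) / 3 = t } where
  toFun := fun a => ⟨⟨3 * t + a, by omega⟩, by simp only []; omega⟩
  invFun := fun i => ⟨(i : ℕ) % 3, by omega⟩
  left_inv := by rintro ⟨a, ha⟩; ext; simp only [Fin.val_mk]; omega
  right_inv := by
    rintro ⟨⟨i, hi⟩, hit⟩
    ext
    simp only [Fin.val_mk] at hit ⊢
    omega

lemma det_Mmat (r : ℕ) : (Mmat (3 * r)).det = (X 0 ^ 3 + X 1 * X 2 * X 3 : MvPolynomial (Fin 6) ℂ) ^ r := by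
  rw [(Mmat_blockTriangular (3 * r)).det]
  have himage : (Finset.univ.image fun i : Fin (3 * r) => (i : ℕ) / 3) = Finset.range r := by
    ext t
    simp only [Finset.mem_image, Finset.mem_univ, true_and, Finset.mem_range]
    constructor
    · rintro ⟨i, rfl⟩; omega
    · intro ht; exact ⟨⟨3 * t, by omega⟩, by simp only []; omega⟩
  rw [himage]
  have key : ∀ t ∈ Finset.range r,
      ((Mmat (3 * r)).toSquareBlock (fun i : Fin (3*r) => (i : ℕ) / 3) t).det
        = (X 0 ^ 3 + X 1 * X 2 * X 3 : MvPolynomial (Fin 6) ℂ) := by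
    intro t ht
    rw [Finset.mem_range] at ht
    rw [← Matrix.det_submatrix_equiv_self (blockEquiv r t ht)]
    set e := blockEquiv r t ht with he
    have entry : ∀ a b : Fin 3,
        (((Mmat (3 * r)).toSquareBlock (fun i : Fin (3*r) => (i : ℕ) / 3) t).submatrix e e) a b
        = Mmat (3 * r) ⟨3 * t + a, by omega⟩ ⟨3 * t + b, by omega⟩ := by
      intro a b
      simp only [Matrix.submatrix_apply, Matrix.toSquareBlock_def, he,
        blockEquiv, Equiv.coe_fn_mk, Matrix.of_apply]
    rw [Matrix.det_fin_three]
    simp only [entry, Fin.val_zero, Fin.val_one, Fin.val_two]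
    have E : ∀ (a b : ℕ) (ha : 3 * t + a < 3 * r) (hb : 3 * t + b < 3 * r),
        Mmat (3 * r) ⟨3 * t + a, ha⟩ ⟨3 * t + b, hb⟩ =
        (if 3 * t + a = 3 * t + b then X 0
         else if 3 * t + b = (3 * t + a) + 1 then
           (if (3 * t + a) % 3 = 0 then X 1 else if (3 * t + a) % 3 = 1 then X 2 else X 4)
         else if (3 * t + a) % 3 = 2 ∧ (3 * t + b) + 2 = 3 * t + a then X 3
         else 0) := fun a b ha hb => rfl
    have h00 : Mmat (3 * r) ⟨3 * t + 0, by omega⟩ ⟨3 * t + 0, by omega⟩ = X 0 := by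
      rw [E, if_pos rfl]
    have h01 : Mmat (3 * r) ⟨3 * t + 0, by omega⟩ ⟨3 * t + 1, by omega⟩ = X 1 := by
      rw [E, if_neg (by omega), if_pos (by omega), if_pos (by omega)]
    have h02 : Mmat (3 * r) ⟨3 * t + 0, by omega⟩ ⟨3 * t + 2, by omega⟩ = 0 := by
      rw [E, if_neg (by omega), if_neg (by omega), if_neg (by omega)]
    have h10 : Mmat (3 * r) ⟨3 * t + 1, by omega⟩ ⟨3 * t + 0, by omega⟩ = 0 := by
      rw [E, if_neg (by omega), if_neg (by omega), if_neg (by omega)]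
    have h11 : Mmat (3 * r) ⟨3 * t + 1, by omega⟩ ⟨3 * t + 1, by omega⟩ = X 0 := by
      rw [E, if_pos rfl]
    have h12 : Mmat (3 * r) ⟨3 * t + 1, by omega⟩ ⟨3 * t + 2, by omega⟩ = X 2 := by
      rw [E, if_neg (by omega), if_pos (by omega), if_neg (by omega), if_pos (by omega)]
    have h20 : Mmat (3 * r) ⟨3 * t + 2, by omega⟩ ⟨3 * t + 0, by omega⟩ = X 3 := by
      rw [E, if_neg (by omega), if_neg (by omega), if_pos (by omega)]
    have h21 : Mmat (3 * r) ⟨3 * t + 2, by omega⟩ ⟨3 * t + 1, by omega⟩ = 0 := by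
      rw [E, if_neg (by omega), if_neg (by omega), if_neg (by omega)]
    have h22 : Mmat (3 * r) ⟨3 * t + 2, by omega⟩ ⟨3 * t + 2, by omega⟩ = X 0 := by
      rw [E, if_pos rfl]
    simp only [h00, h01, h02, h10, h11, h12, h20, h21, h22]
    ring
  rw [Finset.prod_congr rfl key, Finset.prod_const, Finset.card_range]

/-- The (upper) shift matrix. -/
def shiftM (n : ℕ) : Matrix (Fin n) (Fin n) ℂ :=
  Matrix.of fun i j => if (j : ℕ) = (i : ℕ) + 1 then 1 else 0

lemma shiftM_pow (n k : ℕ) :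
    (shiftM n) ^ k = Matrix.of fun i j : Fin n => if (j : ℕ) = (i : ℕ) + k then (1 : ℂ) else 0 := by
  induction k with
  | zero =>
    ext i j
    simp only [pow_zero, Matrix.one_apply, Matrix.of_apply, Nat.add_zero]
    by_cases h : i = j
    · subst h; rw [if_pos rfl, if_pos rfl]
    · rw [if_neg h, if_neg (by rw [Fin.ext_iff] at h; omega)]
  | succ k ih =>
    ext i j
    rw [pow_succ, ih, Matrix.mul_apply, Matrix.of_apply]
    by_cases h : (i : ℕ) + k < n
    · rw [Finset.sum_eq_single (⟨(i : ℕ) + k, h⟩ : Fin n)]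
      · simp [shiftM, show (i : ℕ) + k + 1 = (i : ℕ) + (k + 1) from by omega]
      · intro b _ hb
        have hb' : (b : ℕ) ≠ (i : ℕ) + k := by
          simp only [ne_eq, Fin.ext_iff, Fin.val_mk] at hb; exact hb
        simp only [Matrix.of_apply, if_neg hb', zero_mul]
      · intro hmem; exact absurd (Finset.mem_univ _) hmem
    · rw [if_neg (by have := j.isLt; omega)]
      apply Finset.sum_eq_zero
      intro b _
      have : (b : ℕ) ≠ (i : ℕ) + k := by have := b.isLt; omega
      simp only [Matrix.of_apply, if_neg this, zero_mul]

lemma shiftM_pow_n (n : ℕ) : (shiftM n) ^ n = 0 := by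
  rw [shiftM_pow]
  ext i j
  have := j.isLt
  simp only [Matrix.of_apply, Matrix.zero_apply]
  rw [if_neg (by omega)]

lemma shiftM_pow_pred (n : ℕ) (hn : 0 < n) :
    ((shiftM n) ^ (n - 1)) ⟨0, hn⟩ ⟨n - 1, by omega⟩ = 1 := by
  rw [shiftM_pow]
  simp only [Matrix.of_apply, Fin.val_mk]
  rw [if_pos (by omega)]

/-- A nilpotent `s×s` matrix to the power `k ≥ s` is zero. -/
lemma matpow_eq_zero_of_pow_eq_zero {s : ℕ} {A : Matrix (Fin s) (Fin s) ℂ} {m : ℕ}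
    (h : A ^ m = 0) {k : ℕ} (hk : s ≤ k) : A ^ k = 0 := by
  have hs : A ^ s = 0 := by
    set φ : Module.End ℂ (Fin s → ℂ) := Matrix.toLinAlgEquiv' A with hφdef
    have hφ : φ ^ m = 0 := by
      rw [hφdef, ← map_pow, h, map_zero]
    have hker : LinearMap.ker (φ ^ m) = ⊤ := by rw [hφ]; exact LinearMap.ker_zero
    have hle := Module.End.ker_pow_le_ker_pow_finrank (K := ℂ) (V := Fin s → ℂ) φ m
    rw [hker] at hle
    have hfr : Module.finrank ℂ (Fin s → ℂ) = s := by
      rw [Module.finrank_pi]; simp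
    have hzero : φ ^ s = 0 := by
      rw [← LinearMap.ker_eq_top]
      rw [hfr] at hle
      exact top_le_iff.mp hle
    apply (Matrix.toLinAlgEquiv' (R := ℂ) (n := Fin s)).injective
    rw [map_pow, ← hφdef, hzero, map_zero]
  calc A ^ k = A ^ s * A ^ (k - s) := by rw [← pow_add]; congr 1; omega
  _ = 0 := by rw [hs, zero_mul]

/-- evaluation sending `x₀ ↦ 1`, the rest to `0`. -/
def v0 : Fin 6 → ℂ := fun k => if k = 0 then 1 else 0

/-- evaluation sending `x₁, x₂, x₄ ↦ 1`, the rest to `0`. -/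
def v1 : Fin 6 → ℂ := fun k => if k = 1 ∨ k = 2 ∨ k = 4 then 1 else 0

lemma Mmat_map_v0 (n : ℕ) : (Mmat n).map (eval v0) = (1 : Matrix (Fin n) (Fin n) ℂ) := by
  ext i j
  rw [Matrix.map_apply, Matrix.one_apply]
  simp only [Mmat, of_apply]
  by_cases h : (i : ℕ) = j
  · rw [if_pos h, if_pos (Fin.ext h)]
    simp [v0]
  · rw [if_neg h, if_neg (fun hij => h (congrArg Fin.val hij))]
    split_ifs <;> simp [v0]

lemma Mmat_map_v1 (n : ℕ) : (Mmat n).map (eval v1) = shiftM n := by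
  ext i j
  rw [Matrix.map_apply]
  simp only [Mmat, shiftM, of_apply]
  by_cases h : (i : ℕ) = j
  · rw [if_pos h, if_neg (by omega)]
    simp [v1]
  · rw [if_neg h]
    by_cases h2 : (j : ℕ) = (i : ℕ) + 1
    · rw [if_pos h2, if_pos h2]
      split_ifs <;> simp [v1]
    · rw [if_neg h2, if_neg h2]
      split_ifs <;> simp [v1]


end UlrichAux

/-- There exists an irreducible homogeneous cubic `f` in
`ℂ[x₀,…,x₅]` such that for every `r ≥ 2` there is a `3r × 3r` matrix `M` of linear
forms with `det M = f ^ r` which is indecomposable: no transformation `P·M·Q` by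
invertible scalar matrices `P, Q` is block-diagonal with two nontrivial blocks. -/
theorem exists_cubic_with_indecomposable_ulrich_all_ranks :
    ∃ f : MvPolynomial (Fin 6) ℂ, Irreducible f ∧ f.IsHomogeneous 3 ∧
      ∀ r : ℕ, 2 ≤ r →
        ∃ M : Matrix (Fin (3 * r)) (Fin (3 * r)) (MvPolynomial (Fin 6) ℂ),
          (∀ i j, (M i j).IsHomogeneous 1) ∧ M.det = f ^ r ∧
          ¬ ∃ (P Q : Matrix (Fin (3 * r)) (Fin (3 * r)) ℂ) (_ : IsUnit P)
              (_ : IsUnit Q) (s : ℕ) (hs : 0 < s) (hs' : s < 3 * r)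
              (M₁ : Matrix (Fin s) (Fin s) (MvPolynomial (Fin 6) ℂ))
              (M₂ : Matrix (Fin (3 * r - s)) (Fin (3 * r - s))
                (MvPolynomial (Fin 6) ℂ)),
              P.map MvPolynomial.C * M * Q.map MvPolynomial.C =
                Matrix.reindex (finSumFinEquiv.trans (finCongr (by omega)))
                  (finSumFinEquiv.trans (finCongr (by omega)))
                  (Matrix.fromBlocks M₁ 0 0 M₂) := by
  refine ⟨fCubic, irreducible_fCubic, fCubic_homogeneous, ?_⟩
  intro r hr
  refine ⟨Mmat (3 * r), fun i j => Mmat_homogeneous _ i j, det_Mmat r, ?_⟩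
  rintro ⟨P, Q, hP, hQ, s, hs, hs', M₁, M₂, heq⟩
  have hsum : s + (3 * r - s) = 3 * r := by omega
  set e' : Fin s ⊕ Fin (3 * r - s) ≃ Fin (3 * r) := finSumFinEquiv.trans (finCongr hsum) with he'
  -- the two scalar consequences of heq
  have extract : ∀ v : Fin 6 → ℂ,
      P * (Mmat (3 * r)).map (eval v) * Q =
        (Matrix.fromBlocks (M₁.map (eval v)) 0 0 (M₂.map (eval v))).submatrix
          e'.symm e'.symm := by
    intro v
    have h := congrArg (fun Z => Z.map (eval v)) heq
    simp only [Matrix.map_mul (f := (eval v : MvPolynomial (Fin 6) ℂ →+* ℂ))] at h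
    rw [Matrix.map_map, Matrix.map_map] at h
    have hC : ((eval v : MvPolynomial (Fin 6) ℂ →+* ℂ) : MvPolynomial (Fin 6) ℂ → ℂ) ∘
        (MvPolynomial.C : ℂ →+* MvPolynomial (Fin 6) ℂ) = id := by
      funext x; simp
    rw [hC, Matrix.map_id, Matrix.map_id] at h
    rw [h]
    rw [Matrix.reindex_apply, ← Matrix.submatrix_map, Matrix.fromBlocks_map]
    simp only [Matrix.map_zero _ (map_zero _)]
  have h0 := extract v0
  have h1 := extract v1
  rw [Mmat_map_v0, Matrix.mul_one] at h0
  rw [Mmat_map_v1] at h1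
  set D₁ := M₁.map (eval v0)
  set D₂ := M₂.map (eval v0)
  set B₁ := M₁.map (eval v1)
  set B₂ := M₂.map (eval v1)
  -- pass to the sum type
  set P' := P.submatrix e' e' with hP'def
  set Q' := Q.submatrix e' e' with hQ'def
  set W' := ((shiftM (3 * r)).submatrix e' e' :
    Matrix (Fin s ⊕ Fin (3 * r - s)) (Fin s ⊕ Fin (3 * r - s)) ℂ) with hW'def
  have sub_of : ∀ Z : Matrix (Fin (3 * r)) (Fin (3 * r)) ℂ,
      Z = (Matrix.fromBlocks D₁ 0 0 D₂).submatrix e'.symm e'.symm →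
      Z.submatrix e' e' = Matrix.fromBlocks D₁ 0 0 D₂ := by
    intro Z hZ
    rw [hZ, Matrix.submatrix_submatrix]
    simp [Equiv.symm_comp_self]
  have h0' : P' * Q' = Matrix.fromBlocks D₁ 0 0 D₂ := by
    rw [hP'def, hQ'def, Matrix.submatrix_mul_equiv]
    exact sub_of _ h0
  have h1' : P' * W' * Q' = Matrix.fromBlocks B₁ 0 0 B₂ := by
    have : (P * shiftM (3 * r) * Q).submatrix e' e' = P' * W' * Q' := by
      rw [hP'def, hQ'def, hW'def, Matrix.submatrix_mul_equiv, Matrix.submatrix_mul_equiv]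
    rw [← this, h1, Matrix.submatrix_submatrix]
    simp [Equiv.symm_comp_self]
  -- invertibility
  haveI iP' : Invertible P' := P'.invertibleOfIsUnitDet
    (by rw [hP'def, Matrix.det_submatrix_equiv_self]; exact (Matrix.isUnit_iff_isUnit_det P).mp hP)
  haveI iQ' : Invertible Q' := Q'.invertibleOfIsUnitDet
    (by rw [hQ'def, Matrix.det_submatrix_equiv_self]; exact (Matrix.isUnit_iff_isUnit_det Q).mp hQ)
  haveI iFB : Invertible (Matrix.fromBlocks D₁ 0 0 D₂) :=
    (invertibleMul P' Q').copy _ h0'.symm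
  haveI iD₁ : Invertible D₁ := (Matrix.invertibleOfFromBlocksZero₂₁Invertible D₁ 0 D₂).1
  haveI iD₂ : Invertible D₂ := (Matrix.invertibleOfFromBlocksZero₂₁Invertible D₁ 0 D₂).2
  have hinvFB : ⅟(Matrix.fromBlocks D₁ 0 0 D₂) = Matrix.fromBlocks (⅟D₁) 0 0 (⅟D₂) := by
    apply invOf_eq_right_inv
    rw [Matrix.fromBlocks_multiply]
    simp [Matrix.fromBlocks_one]
  set C₁ := ⅟D₁ * B₁ with hC₁def
  set C₂ := ⅟D₂ * B₂ with hC₂def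
  set Cm := ⅟Q' * W' * Q' with hCmdef
  have h2 : Matrix.fromBlocks D₁ 0 0 D₂ * Cm = Matrix.fromBlocks B₁ 0 0 B₂ := by
    rw [← h0', ← h1', hCmdef]
    simp only [← Matrix.mul_assoc]
    rw [Matrix.mul_assoc P' Q' (⅟Q'), mul_invOf_self, Matrix.mul_one]
  have hC : Cm = Matrix.fromBlocks C₁ 0 0 C₂ := by
    have : Cm = ⅟(Matrix.fromBlocks D₁ 0 0 D₂) * Matrix.fromBlocks B₁ 0 0 B₂ := by
      rw [← h2, Matrix.invOf_mul_cancel_left]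
    rw [this, hinvFB, Matrix.fromBlocks_multiply]
    simp [hC₁def, hC₂def]
  have hpow : ∀ k : ℕ, Cm ^ k = ⅟Q' * ((shiftM (3 * r)) ^ k).submatrix e' e' * Q' := by
    intro k
    induction k with
    | zero =>
      rw [pow_zero, pow_zero, Matrix.submatrix_one_equiv, Matrix.mul_one, invOf_mul_self]
    | succ k ih =>
      rw [pow_succ, ih, hCmdef, pow_succ, ← Matrix.submatrix_mul_equiv _ _ _ e' _]
      simp only [← Matrix.mul_assoc]
      rw [Matrix.mul_assoc _ Q' (⅟Q'), mul_invOf_self, Matrix.mul_one]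
  have hbpow : ∀ k : ℕ, Cm ^ k = Matrix.fromBlocks (C₁ ^ k) 0 0 (C₂ ^ k) := by
    intro k
    induction k with
    | zero => simp [Matrix.fromBlocks_one]
    | succ k ih =>
      rw [pow_succ, ih, hC, Matrix.fromBlocks_multiply]
      simp [pow_succ]
  have hCn : Cm ^ (3 * r) = 0 := by
    rw [hpow, shiftM_pow_n]
    simp
  have hC₁n : C₁ ^ (3 * r) = 0 := by
    have h := hbpow (3 * r)
    rw [hCn] at h
    ext i j
    have := congrFun (congrFun h.symm (Sum.inl i)) (Sum.inl j)
    simpa [Matrix.fromBlocks_apply₁₁] using this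
  have hC₂n : C₂ ^ (3 * r) = 0 := by
    have h := hbpow (3 * r)
    rw [hCn] at h
    ext i j
    have := congrFun (congrFun h.symm (Sum.inr i)) (Sum.inr j)
    simpa [Matrix.fromBlocks_apply₂₂] using this
  have hCpred : Cm ^ (3 * r - 1) = 0 := by
    rw [hbpow,
      matpow_eq_zero_of_pow_eq_zero hC₁n (by omega),
      matpow_eq_zero_of_pow_eq_zero hC₂n (by omega),
      Matrix.fromBlocks_zero]
  have hS : ((shiftM (3 * r)) ^ (3 * r - 1)).submatrix e' e' = 0 := by
    have h := hpow (3 * r - 1)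
    rw [hCpred] at h
    have h' := congrArg (fun Z => Q' * Z * ⅟Q') h.symm
    simp only [Matrix.mul_zero, Matrix.zero_mul] at h'
    simp only [← Matrix.mul_assoc] at h'
    rw [mul_invOf_self, Matrix.one_mul, Matrix.mul_assoc, mul_invOf_self,
      Matrix.mul_one] at h'
    exact h' 
  have hpos : 0 < 3 * r := by omega
  have hentry := congrFun (congrFun hS (e'.symm ⟨0, hpos⟩)) (e'.symm ⟨3 * r - 1, by omega⟩)
  rw [Matrix.submatrix_apply, Equiv.apply_symm_apply, Equiv.apply_symm_apply] at hentry
  rw [shiftM_pow_pred (3 * r) hpos] at hentry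
  simp only [Matrix.zero_apply] at hentry
  exact one_ne_zero hentry
end
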